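/- Let H and H̃ be separable complex Hilbert spaces, A ∈ B(H) and B ∈ B(H̃), and assume σ(B) = σ_p(B) = ℂ \ ρ_sF(A). Then for the direct sum operator A ⊕ B on H ⊕ H̃: (i) σ(A ⊕ B) = σ(A); (ii) σ_c(A ⊕ B) = ∅; (iii) σ_e(A ⊕ B) = σ_e(A); (iv) σ_0(A ⊕ B) = σ_0(A) and dim(ker(A ⊕ B − λ)) = dim(ker(A − λ)) for all λ ∈ σ_0(A). -/

import Mathlib

noncomputable section

/-- The point spectrum of a bounded operator: the set of `l : ℂ` such that
`T - l • id` has nontrivial kernel. -/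
def pointSpectrum {E : Type*} [NormedAddCommGroup E] [InnerProductSpace ℂ E]
    (T : E →L[ℂ] E) : Set ℂ :=
  {l : ℂ | LinearMap.ker ((T - l • (1 : E →L[ℂ] E) : E →L[ℂ] E) : E →ₗ[ℂ] E) ≠ ⊥}

/-- The continuous spectrum of a bounded operator on a Hilbert space:
`σ_c(T) = σ(T) \\ (σ_p(T) ∪ conj (σ_p(T*)))`. -/
def continuousSpectrum {E : Type*} [NormedAddCommGroup E] [InnerProductSpace ℂ E]
    [CompleteSpace E] (T : E →L[ℂ] E) : Set ℂ :=
  spectrum ℂ T \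
    (pointSpectrum T ∪ (starRingEnd ℂ) '' pointSpectrum (ContinuousLinearMap.adjoint T))

/-- An operator is semi-Fredholm if it has closed range and its kernel or the kernel
of its adjoint is finite dimensional. -/
def IsSemiFredholm {E : Type*} [NormedAddCommGroup E] [InnerProductSpace ℂ E]
    [CompleteSpace E] (T : E →L[ℂ] E) : Prop :=
  IsClosed (Set.range T) ∧
    (FiniteDimensional ℂ (LinearMap.ker (T : E →ₗ[ℂ] E)) ∨
      FiniteDimensional ℂ (LinearMap.ker ((ContinuousLinearMap.adjoint T : E →L[ℂ] E) : E →ₗ[ℂ] E)))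

/-- `ρ_sF(T)`: the set of `l : ℂ` such that `T - l • id` is semi-Fredholm. -/
def rhoSF {E : Type*} [NormedAddCommGroup E] [InnerProductSpace ℂ E]
    [CompleteSpace E] (T : E →L[ℂ] E) : Set ℂ :=
  {l : ℂ | IsSemiFredholm (T - l • (1 : E →L[ℂ] E))}

/-- Invertibility modulo the compact operators, i.e. invertibility of the image of the
operator in the Calkin algebra `B(H)/K(H)`. -/
def essInvertible {E : Type*} [NormedAddCommGroup E] [InnerProductSpace ℂ E]
    [CompleteSpace E] (T : E →L[ℂ] E) : Prop :=
  ∃ S : E →L[ℂ] E, IsCompactOperator ⇑(S * T - 1) ∧ IsCompactOperator ⇑(T * S - 1)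

/-- The essential spectrum of `T`: the spectrum of the image of `T` in the Calkin
algebra `B(H)/K(H)`, i.e. the set of `l : ℂ` such that `T - l • id` is not invertible
modulo the compact operators. -/
def essSpectrum {E : Type*} [NormedAddCommGroup E] [InnerProductSpace ℂ E]
    [CompleteSpace E] (T : E →L[ℂ] E) : Set ℂ :=
  {l : ℂ | ¬ essInvertible (T - l • (1 : E →L[ℂ] E))}

/-- The normal spectrum `σ_0(T)`: the isolated points of the spectrum of `T` which do
not belong to the essential spectrum of `T`. -/
def normalSpectrum {E : Type*} [NormedAddCommGroup E] [InnerProductSpace ℂ E]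
    [CompleteSpace E] (T : E →L[ℂ] E) : Set ℂ :=
  {l : ℂ | l ∈ spectrum ℂ T ∧ (∃ U ∈ nhds l, spectrum ℂ T ∩ U = {l}) ∧ l ∉ essSpectrum T}

/-- The direct sum `A ⊕ B` of two operators, acting on the Hilbert space direct sum
`H ⊕ H̃`, realized as `WithLp 2 (E × F)`. -/
noncomputable def dsum {E F : Type*} [NormedAddCommGroup E] [InnerProductSpace ℂ E]
    [NormedAddCommGroup F] [InnerProductSpace ℂ F]
    (A : E →L[ℂ] E) (B : F →L[ℂ] F) : WithLp 2 (E × F) →L[ℂ] WithLp 2 (E × F) :=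
  ((WithLp.prodContinuousLinearEquiv 2 ℂ E F).symm : (E × F) →L[ℂ] WithLp 2 (E × F)) ∘L
    (A.prodMap B) ∘L
    ((WithLp.prodContinuousLinearEquiv 2 ℂ E F) : WithLp 2 (E × F) →L[ℂ] (E × F))

universe u

/-!
Invertible operators, and more generally operators invertible modulo compact operators, are
semi-Fredholm: for `S T = 1 + K` with `K` compact, every bounded sequence along which `T` tends
to `0` has a convergent subsequence, which makes `ker T` finite dimensional and `T` bounded below
on `(ker T)ᗮ`. Hence the hypothesis `σ(B) = ℂ \ ρ_sF(A)` gives `σ_e(B) ⊆ σ(B) ⊆ σ_e(A) ⊆ σ(A)`.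
The spectrum, essential spectrum and point spectrum of `A ⊕ B` are the unions of those of `A`
and `B`, which gives (i), (iii) and so the equality in (iv); off `σ(B)` the summand `B - λ` is
injective, so `ker (A ⊕ B - λ) ≅ ker (A - λ)`. For (ii), a point of `σ_c(A ⊕ B)` is not an
eigenvalue of `B`, so it lies in `ρ_sF(A)`; there `A - λ` has closed range and both `A - λ` and
its adjoint are injective, so `A - λ` is invertible.
-/

open Filter Topology ContinuousLinearMap

lemma notMem_spectrum_iff_isUnit_sub_smul_one {R A : Type*} [CommSemiring R] [Ring A]
    [Algebra R A] {r : R} {a : A} : r ∉ spectrum R a ↔ IsUnit (a - r • 1) := by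
  rw [spectrum.notMem_iff, Algebra.algebraMap_eq_smul_one, ← IsUnit.neg_iff, neg_sub]

lemma IsCompactOperator.prodMap {M₁ M₂ N₁ N₂ : Type*} [Zero M₁] [Zero M₂] [TopologicalSpace M₁]
    [TopologicalSpace M₂] [TopologicalSpace N₁] [TopologicalSpace N₂] {f : M₁ → N₁} {g : M₂ → N₂}
    (hf : IsCompactOperator f) (hg : IsCompactOperator g) : IsCompactOperator (Prod.map f g) := by
  obtain ⟨K, hK, hfK⟩ := hf
  obtain ⟨L, hL, hgL⟩ := hg
  refine ⟨K ×ˢ L, hK.prod hL, ?_⟩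
  rw [Set.preimage_prod_map_prod]
  exact prod_mem_nhds hfK hgL

section LeftInverseModuloCompact

variable {𝕜 E : Type*} [NontriviallyNormedField 𝕜] [NormedAddCommGroup E] [NormedSpace 𝕜 E]
  {S T : E →L[𝕜] E}

lemma exists_subseq_tendsto_of_tendsto_apply_zero (hST : IsCompactOperator ⇑(S * T - 1))
    {u : ℕ → E} {r : ℝ} (hu : ∀ n, ‖u n‖ ≤ r) (hTu : Tendsto (T ∘ u) atTop (𝓝 0)) :
    ∃ x, ∃ φ : ℕ → ℕ, StrictMono φ ∧ Tendsto (u ∘ φ) atTop (𝓝 x) := by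
  obtain ⟨z, -, φ, hφ, hz⟩ := (hST.isCompact_closure_image_closedBall r).tendsto_subseq
    (x := ⇑(S * T - 1) ∘ u) fun n => subset_closure ⟨u n, by simpa using hu n, rfl⟩
  refine ⟨-z, φ, hφ, ?_⟩
  have hSTu : Tendsto (S ∘ (T ∘ u) ∘ φ) atTop (𝓝 0) := by
    simpa using (S.continuous.tendsto 0).comp (hTu.comp hφ.tendsto_atTop)
  convert hSTu.sub hz using 1
  · ext n; simp
  · simp

lemma finiteDimensional_ker_of_isCompactOperator_mul_sub_one [CompleteSpace 𝕜]
    (hST : IsCompactOperator ⇑(S * T - 1)) :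
    FiniteDimensional 𝕜 (LinearMap.ker (T : E →ₗ[𝕜] E)) := by
  have hker : IsClosed (LinearMap.ker (T : E →ₗ[𝕜] E) : Set E) := T.isClosed_ker
  have hball : IsCompact ((LinearMap.ker (T : E →ₗ[𝕜] E) : Set E) ∩ Metric.closedBall 0 1) := by
    refine IsSeqCompact.isCompact fun u hu => ?_
    have hTu : Tendsto (T ∘ u) atTop (𝓝 0) := tendsto_const_nhds.congr fun n => ((hu n).1).symm
    obtain ⟨x, φ, hφ, hx⟩ :=
      exists_subseq_tendsto_of_tendsto_apply_zero hST (fun n => by simpa using (hu n).2) hTu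
    exact ⟨x, (hker.inter Metric.isClosed_closedBall).mem_of_tendsto hx
      (Eventually.of_forall fun n => hu (φ n)), φ, hφ, hx⟩
  have hpre : Metric.closedBall (0 : LinearMap.ker (T : E →ₗ[𝕜] E)) 1 =
      Subtype.val ⁻¹' ((LinearMap.ker (T : E →ₗ[𝕜] E) : Set E) ∩ Metric.closedBall 0 1) := by
    ext; simp
  refine FiniteDimensional.of_isCompact_closedBall₀ 𝕜 one_pos ?_
  rw [hpre]
  exact hker.isClosedEmbedding_subtypeVal.isCompact_preimage hball

end LeftInverseModuloCompact

lemma exists_antilipschitzWith_of_tendsto_subseq {𝕜 E F : Type*} [RCLike 𝕜]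
    [NormedAddCommGroup E] [NormedSpace 𝕜 E] [NormedAddCommGroup F] [NormedSpace 𝕜 F]
    {T : E →L[𝕜] F} (hT : Function.Injective T)
    (hsubseq : ∀ u : ℕ → E, (∀ n, ‖u n‖ = 1) → Tendsto (T ∘ u) atTop (𝓝 0) →
      ∃ x, ∃ φ : ℕ → ℕ, StrictMono φ ∧ Tendsto (u ∘ φ) atTop (𝓝 x)) :
    ∃ K, AntilipschitzWith K T := by
  rw [antilipschitzWith_iff_exists_mul_le_norm]
  by_contra! hsmall
  have (n : ℕ) : ∃ v : E, ‖v‖ = 1 ∧ ‖T v‖ < 1 / (n + 1) := by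
    obtain ⟨x, hx⟩ := hsmall (1 / (n + 1)) (by positivity)
    have hx0 : x ≠ 0 := by rintro rfl; simp at hx
    refine ⟨(‖x‖⁻¹ : 𝕜) • x, norm_smul_inv_norm hx0, ?_⟩
    rw [map_smul, norm_smul, norm_inv, RCLike.norm_ofReal, abs_norm,
      inv_mul_lt_iff₀ (norm_pos_iff.2 hx0), mul_comm]
    exact hx
  choose v hv_norm hTv using this
  have hTv0 : Tendsto (T ∘ v) atTop (𝓝 0) :=
    squeeze_zero_norm (fun n => (hTv n).le) tendsto_one_div_add_atTop_nhds_zero_nat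
  obtain ⟨x, φ, hφ, hx⟩ := hsubseq v hv_norm hTv0
  have hx_norm : ‖x‖ = 1 := tendsto_nhds_unique hx.norm (by simp [hv_norm])
  have hTx : T x = 0 :=
    tendsto_nhds_unique ((T.continuous.tendsto x).comp hx) (hTv0.comp hφ.tendsto_atTop)
  rw [hT (hTx.trans (map_zero T).symm), norm_zero] at hx_norm
  exact zero_ne_one hx_norm

lemma surjective_of_isClosed_range_of_injective_adjoint {𝕜 E F : Type*} [RCLike 𝕜]
    [NormedAddCommGroup E] [InnerProductSpace 𝕜 E] [CompleteSpace E]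
    [NormedAddCommGroup F] [InnerProductSpace 𝕜 F] [CompleteSpace F] {T : E →L[𝕜] F}
    (hT : IsClosed (Set.range T)) (hT' : Function.Injective (adjoint T)) :
    Function.Surjective T := by
  have : CompleteSpace (LinearMap.range (T : E →ₗ[𝕜] F)) := hT.completeSpace_coe
  rw [← coe_coe, ← LinearMap.range_eq_top, ← Submodule.orthogonal_eq_bot_iff, orthogonal_range,
    LinearMap.ker_eq_bot]
  exact hT'

section HilbertSpace

variable {E : Type*} [NormedAddCommGroup E] [InnerProductSpace ℂ E]

lemma notMem_pointSpectrum_iff {T : E →L[ℂ] E} {l : ℂ} :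
    l ∉ pointSpectrum T ↔ Function.Injective (T - l • (1 : E →L[ℂ] E)) := by
  rw [pointSpectrum, Set.mem_ofPred_eq, not_not, LinearMap.ker_eq_bot, coe_coe]

variable [CompleteSpace E]

lemma isClosed_range_of_essInvertible {T : E →L[ℂ] E} (h : essInvertible T) :
    IsClosed (Set.range T) := by
  obtain ⟨S, hST, -⟩ := h
  set M := (LinearMap.ker (T : E →ₗ[ℂ] E))ᗮ
  have hM : IsClosed (M : Set E) := Submodule.isClosed_orthogonal _
  have : CompleteSpace M := hM.completeSpace_coe
  have hrange : Set.range T = Set.range (T ∘L M.subtypeL) := by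
    refine subset_antisymm ?_ fun _ ⟨m, hm⟩ => ⟨m, hm⟩
    rintro _ ⟨x, rfl⟩
    obtain ⟨k, hk, m, hm, rfl⟩ := (LinearMap.ker (T : E →ₗ[ℂ] E)).exists_add_mem_mem_orthogonal x
    exact ⟨⟨m, hm⟩, by simp [show T k = 0 from hk]⟩
  have hinj : Function.Injective (T ∘L M.subtypeL) := by
    refine (injective_iff_map_eq_zero _).mpr fun m hm => Subtype.ext ?_
    exact Submodule.disjoint_def.mp
      (Submodule.orthogonal_disjoint (LinearMap.ker (T : E →ₗ[ℂ] E))) m hm m.2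
  obtain ⟨K, hK⟩ := exists_antilipschitzWith_of_tendsto_subseq hinj fun u hu hTu => by
    obtain ⟨x, φ, hφ, hx⟩ := exists_subseq_tendsto_of_tendsto_apply_zero hST
      (u := Subtype.val ∘ u) (fun n => (hu n).le) hTu
    have hxM : x ∈ M := hM.mem_of_tendsto hx (Eventually.of_forall fun n => (u (φ n)).2)
    exact ⟨⟨x, hxM⟩, φ, hφ, tendsto_subtype_rng.mpr hx⟩
  rw [hrange]
  exact hK.isClosed_range (T ∘L M.subtypeL).uniformContinuous

lemma isSemiFredholm_of_essInvertible {T : E →L[ℂ] E} (h : essInvertible T) :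
    IsSemiFredholm T := by
  have ⟨_, hST, _⟩ := h
  exact ⟨isClosed_range_of_essInvertible h,
    .inl (finiteDimensional_ker_of_isCompactOperator_mul_sub_one hST)⟩

lemma IsUnit.essInvertible {T : E →L[ℂ] E} (h : IsUnit T) : essInvertible T := by
  obtain ⟨u, rfl⟩ := h
  exact ⟨↑u⁻¹, by simp [isCompactOperator_zero], by simp [isCompactOperator_zero]⟩

lemma essSpectrum_subset_spectrum (T : E →L[ℂ] E) : essSpectrum T ⊆ spectrum ℂ T :=
  fun _ hl => by_contra fun hlT => hl (notMem_spectrum_iff_isUnit_sub_smul_one.mp hlT).essInvertible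

lemma compl_rhoSF_subset_essSpectrum (T : E →L[ℂ] E) : (rhoSF T)ᶜ ⊆ essSpectrum T :=
  fun _ hl hlT => hl (isSemiFredholm_of_essInvertible hlT)

lemma adjoint_sub_smul_one (T : E →L[ℂ] E) (l : ℂ) :
    adjoint (T - l • 1) = adjoint T - starRingEnd ℂ l • 1 := by
  simp [← star_eq_adjoint, star_sub, star_smul]

lemma disjoint_continuousSpectrum_rhoSF (T : E →L[ℂ] E) :
    Disjoint (continuousSpectrum T) (rhoSF T) := by
  refine Set.disjoint_left.mpr fun l ⟨hlσ, hlp⟩ hlρ => ?_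
  simp only [Set.mem_union, not_or, Set.mem_image, not_exists, not_and] at hlp
  refine notMem_spectrum_iff_isUnit_sub_smul_one.mpr ?_ hlσ
  rw [isUnit_iff_bijective]
  refine ⟨notMem_pointSpectrum_iff.mp hlp.1,
    surjective_of_isClosed_range_of_injective_adjoint hlρ.1 ?_⟩
  rw [adjoint_sub_smul_one, ← notMem_pointSpectrum_iff]
  exact fun h => hlp.2 _ h (Complex.conj_conj l)

end HilbertSpace

lemma essInvertible.of_intertwining {E G : Type*} [NormedAddCommGroup E]
    [InnerProductSpace ℂ E] [CompleteSpace E] [NormedAddCommGroup G] [InnerProductSpace ℂ G]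
    [CompleteSpace G] {D : G →L[ℂ] G} {X : E →L[ℂ] E} {P : G →L[ℂ] E} {J : E →L[ℂ] G}
    (hPJ : P ∘L J = 1) (hJ : D ∘L J = J ∘L X) (hP : P ∘L D = X ∘L P) (hD : essInvertible D) :
    essInvertible X := by
  obtain ⟨S, hSD, hDS⟩ := hD
  refine ⟨P ∘L S ∘L J, ?_, ?_⟩
  · have : P ∘L S ∘L J * X - 1 = P ∘L (S * D - 1) ∘L J := by
      simp only [mul_def, sub_comp, comp_sub, comp_assoc, hJ, one_def, id_comp, hPJ]
    rw [this]
    exact (hSD.comp_clm J).clm_comp P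
  · have : X * (P ∘L S ∘L J) - 1 = P ∘L (D * S - 1) ∘L J := by
      simp only [mul_def, sub_comp, comp_sub, ← comp_assoc, ← hP, one_def, id_comp, hPJ]
    rw [this]
    exact (hDS.comp_clm J).clm_comp P

section DirectSum

variable {E F : Type*} [NormedAddCommGroup E] [InnerProductSpace ℂ E]
  [NormedAddCommGroup F] [InnerProductSpace ℂ F]

@[simp]
lemma dsum_apply (A : E →L[ℂ] E) (B : F →L[ℂ] F) (x : WithLp 2 (E × F)) :
    dsum A B x = WithLp.toLp 2 (A x.fst, B x.snd) := rfl

lemma coe_dsum (A : E →L[ℂ] E) (B : F →L[ℂ] F) :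
    ⇑(dsum A B) = WithLp.toLp 2 ∘ Prod.map A B ∘ WithLp.ofLp := rfl

lemma dsum_one : dsum (1 : E →L[ℂ] E) (1 : F →L[ℂ] F) = 1 := rfl

lemma dsum_mul (A A' : E →L[ℂ] E) (B B' : F →L[ℂ] F) :
    dsum A B * dsum A' B' = dsum (A * A') (B * B') := rfl

lemma dsum_sub (A A' : E →L[ℂ] E) (B B' : F →L[ℂ] F) :
    dsum A B - dsum A' B' = dsum (A - A') (B - B') := rfl

lemma dsum_sub_smul_one (A : E →L[ℂ] E) (B : F →L[ℂ] F) (l : ℂ) :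
    dsum A B - l • (1 : WithLp 2 (E × F) →L[ℂ] WithLp 2 (E × F)) =
      dsum (A - l • 1) (B - l • 1) := rfl

lemma injective_dsum_iff {A : E →L[ℂ] E} {B : F →L[ℂ] F} :
    Function.Injective (dsum A B) ↔ Function.Injective A ∧ Function.Injective B := by
  rw [coe_dsum, (WithLp.toLp_injective 2).of_comp_iff,
    Function.Injective.of_comp_iff' _ (WithLp.ofLp_bijective 2), Prod.map_injective]

lemma bijective_dsum_iff {A : E →L[ℂ] E} {B : F →L[ℂ] F} :
    Function.Bijective (dsum A B) ↔ Function.Bijective A ∧ Function.Bijective B := by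
  rw [coe_dsum, (WithLp.toLp_bijective 2).of_comp_iff',
    Function.Bijective.of_comp_iff _ (WithLp.ofLp_bijective 2), Prod.map_bijective]

lemma pointSpectrum_dsum (A : E →L[ℂ] E) (B : F →L[ℂ] F) :
    pointSpectrum (dsum A B) = pointSpectrum A ∪ pointSpectrum B := by
  ext l
  rw [← not_iff_not, Set.mem_union, not_or]
  simp only [notMem_pointSpectrum_iff, dsum_sub_smul_one, injective_dsum_iff]

lemma isCompactOperator_dsum {A : E →L[ℂ] E} {B : F →L[ℂ] F} (hA : IsCompactOperator A)
    (hB : IsCompactOperator B) : IsCompactOperator (dsum A B) :=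
  let e := WithLp.prodContinuousLinearEquiv 2 ℂ E F
  ((hA.prodMap hB).comp_clm e.toContinuousLinearMap).clm_comp e.symm.toContinuousLinearMap

section Complete

variable [CompleteSpace E] [CompleteSpace F]

lemma isUnit_dsum_iff {A : E →L[ℂ] E} {B : F →L[ℂ] F} :
    IsUnit (dsum A B) ↔ IsUnit A ∧ IsUnit B := by
  simp only [isUnit_iff_bijective, bijective_dsum_iff]

lemma spectrum_dsum (A : E →L[ℂ] E) (B : F →L[ℂ] F) :
    spectrum ℂ (dsum A B) = spectrum ℂ A ∪ spectrum ℂ B := by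
  ext l
  rw [← not_iff_not, Set.mem_union, not_or]
  simp only [notMem_spectrum_iff_isUnit_sub_smul_one, dsum_sub_smul_one, isUnit_dsum_iff]

lemma adjoint_dsum (A : E →L[ℂ] E) (B : F →L[ℂ] F) :
    adjoint (dsum A B) = dsum (adjoint A) (adjoint B) := by
  refine ((eq_adjoint_iff _ _).mpr fun x y => ?_).symm
  simp [WithLp.prod_inner_apply, adjoint_inner_left]

lemma essInvertible_dsum_iff {A : E →L[ℂ] E} {B : F →L[ℂ] F} :
    essInvertible (dsum A B) ↔ essInvertible A ∧ essInvertible B := by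
  let e := WithLp.prodContinuousLinearEquiv 2 ℂ E F
  refine ⟨fun h => ⟨?_, ?_⟩, fun ⟨⟨SA, hSA, hAS⟩, ⟨SB, hSB, hBS⟩⟩ => ⟨dsum SA SB, ?_, ?_⟩⟩
  · refine h.of_intertwining (P := fst ℂ E F ∘L e.toContinuousLinearMap)
      (J := e.symm.toContinuousLinearMap ∘L inl ℂ E F) rfl ?_ rfl
    ext x; simp [e]
  · refine h.of_intertwining (P := snd ℂ E F ∘L e.toContinuousLinearMap)
      (J := e.symm.toContinuousLinearMap ∘L inr ℂ E F) rfl ?_ rfl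
    ext x; simp [e]
  · rw [dsum_mul, ← dsum_one, dsum_sub]
    exact isCompactOperator_dsum hSA hSB
  · rw [dsum_mul, ← dsum_one, dsum_sub]
    exact isCompactOperator_dsum hAS hBS

lemma essSpectrum_dsum (A : E →L[ℂ] E) (B : F →L[ℂ] F) :
    essSpectrum (dsum A B) = essSpectrum A ∪ essSpectrum B := by
  ext l
  simp only [essSpectrum, Set.mem_ofPred_eq, Set.mem_union, dsum_sub_smul_one,
    essInvertible_dsum_iff, not_and_or]

end Complete

end DirectSum

lemma rank_ker_dsum_of_injective {E F : Type u} [NormedAddCommGroup E] [InnerProductSpace ℂ E]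
    [NormedAddCommGroup F] [InnerProductSpace ℂ F]
    (A : E →L[ℂ] E) {B : F →L[ℂ] F} (hB : Function.Injective B) :
    Module.rank ℂ (LinearMap.ker (dsum A B : WithLp 2 (E × F) →ₗ[ℂ] WithLp 2 (E × F))) =
      Module.rank ℂ (LinearMap.ker (A : E →ₗ[ℂ] E)) := by
  let J : E →ₗ[ℂ] WithLp 2 (E × F) :=
    (WithLp.linearEquiv 2 ℂ (E × F)).symm.toLinearMap ∘ₗ LinearMap.inl ℂ E F
  have hker : LinearMap.ker (dsum A B : WithLp 2 (E × F) →ₗ[ℂ] WithLp 2 (E × F)) =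
      (LinearMap.ker (A : E →ₗ[ℂ] E)).map J := by
    ext ⟨a, b⟩
    simp [J, map_eq_zero_iff B hB, eq_comm (a := (0 : F))]
  have hJ : Function.Injective J := (WithLp.toLp_injective 2).comp (Prod.mk_left_injective 0)
  rw [hker, rank_map_eq hJ]

theorem dsum_spectra_general
    (E : Type u) [NormedAddCommGroup E] [InnerProductSpace ℂ E] [CompleteSpace E]
    (F : Type u) [NormedAddCommGroup F] [InnerProductSpace ℂ F] [CompleteSpace F]
    (A : E →L[ℂ] E) (B : F →L[ℂ] F)
    (hB1 : spectrum ℂ B = pointSpectrum B) (hB2 : spectrum ℂ B = (rhoSF A)ᶜ) :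
    spectrum ℂ (dsum A B) = spectrum ℂ A ∧
      continuousSpectrum (dsum A B) = ∅ ∧
      essSpectrum (dsum A B) = essSpectrum A ∧
      normalSpectrum (dsum A B) = normalSpectrum A ∧
      ∀ l ∈ normalSpectrum A,
        Module.rank ℂ
            (LinearMap.ker ((dsum A B - l • (1 : WithLp 2 (E × F) →L[ℂ] WithLp 2 (E × F)) :
              WithLp 2 (E × F) →L[ℂ] WithLp 2 (E × F)) : WithLp 2 (E × F) →ₗ[ℂ] WithLp 2 (E × F))) =
          Module.rank ℂ (LinearMap.ker ((A - l • (1 : E →L[ℂ] E) : E →L[ℂ] E) : E →ₗ[ℂ] E)) := by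
  have hBA : spectrum ℂ B ⊆ essSpectrum A := hB2 ▸ compl_rhoSF_subset_essSpectrum A
  have hspec : spectrum ℂ (dsum A B) = spectrum ℂ A := by
    rw [spectrum_dsum, Set.union_eq_left.mpr (hBA.trans (essSpectrum_subset_spectrum A))]
  have hess : essSpectrum (dsum A B) = essSpectrum A := by
    rw [essSpectrum_dsum, Set.union_eq_left.mpr ((essSpectrum_subset_spectrum B).trans hBA)]
  refine ⟨hspec, ?_, hess, by simp only [normalSpectrum, hspec, hess], fun l hl => ?_⟩
  · refine Set.eq_empty_of_forall_notMem fun l ⟨hlσ, hlp⟩ => ?_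
    rw [adjoint_dsum, pointSpectrum_dsum, pointSpectrum_dsum, Set.image_union] at hlp
    simp only [Set.mem_union, not_or] at hlp
    have hlρ : l ∈ rhoSF A := by
      rw [← compl_compl (rhoSF A), ← hB2, hB1]
      exact hlp.1.2
    exact Set.disjoint_left.mp (disjoint_continuousSpectrum_rhoSF A)
      ⟨hspec ▸ hlσ, not_or.mpr ⟨hlp.1.1, hlp.2.1⟩⟩ hlρ
  · have hlB : l ∉ pointSpectrum B := hB1 ▸ fun h => hl.2.2 (hBA h)
    rw [dsum_sub_smul_one]
    exact rank_ker_dsum_of_injective _ (notMem_pointSpectrum_iff.mp hlB)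

/-- Let `H`, `H̃` be separable complex Hilbert spaces, `A ∈ B(H)`,
`B ∈ B(H̃)` with `σ(B) = σ_p(B) = ℂ \\ ρ_sF(A)`.  Then (i) `σ(A ⊕ B) = σ(A)`;
(ii) `σ_c(A ⊕ B) = ∅`; (iii) `σ_e(A ⊕ B) = σ_e(A)`; (iv) `σ_0(A ⊕ B) = σ_0(A)` and
`dim ker (A ⊕ B - l) = dim ker (A - l)` for all `l ∈ σ_0(A)`. -/
theorem dsum_spectra
    (E : Type u) [NormedAddCommGroup E] [InnerProductSpace ℂ E] [CompleteSpace E]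
    [TopologicalSpace.SeparableSpace E]
    (F : Type u) [NormedAddCommGroup F] [InnerProductSpace ℂ F] [CompleteSpace F]
    [TopologicalSpace.SeparableSpace F]
    (A : E →L[ℂ] E) (B : F →L[ℂ] F)
    (hB1 : spectrum ℂ B = pointSpectrum B) (hB2 : spectrum ℂ B = (rhoSF A)ᶜ) :
    spectrum ℂ (dsum A B) = spectrum ℂ A ∧
      continuousSpectrum (dsum A B) = ∅ ∧
      essSpectrum (dsum A B) = essSpectrum A ∧
      normalSpectrum (dsum A B) = normalSpectrum A ∧
      ∀ l ∈ normalSpectrum A,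
        Module.rank ℂ
            (LinearMap.ker ((dsum A B - l • (1 : WithLp 2 (E × F) →L[ℂ] WithLp 2 (E × F)) :
              WithLp 2 (E × F) →L[ℂ] WithLp 2 (E × F)) : WithLp 2 (E × F) →ₗ[ℂ] WithLp 2 (E × F))) =
          Module.rank ℂ (LinearMap.ker ((A - l • (1 : E →L[ℂ] E) : E →L[ℂ] E) : E →ₗ[ℂ] E)) :=
  dsum_spectra_general E F A B hB1 hB2

end
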